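/- arXiv:2205.05870 — 5 statements merged into one kernel-verified Lean document; each statement's English description precedes it below -/
import Mathlib

section
/- Every Lagrangian subspace R ⊆ F^{2n} admits a parity-check matrix in the standard form H = [[Y, 0, I_{n_p}, Aᵀ],[-A, I_{n_q}, 0, 0]]·σ_S, where n_p + n_q = n, A is an n_q × n_p matrix, Y is a symmetric n_p × n_p matrix (Y = Yᵀ), and σ_S = diag(σ, σ) is a symplectic permutation matrix for some permutation σ of n letters. -/
/-!
Choose a set `α` of positions whose `q`-coordinates are linearly independent on `R` and
determine all other `q`-coordinates; call the remaining positions `γ`. If `v ∈ R` has vanishing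
coordinates `q_α` and `p_γ`, then `q(v) = 0`, so the symplectic pairing `ω(u, v)` reduces to
`q_α(u) ⬝ p_α(v)` for all `u ∈ R`, and since `q_α(u)` is arbitrary, `p_α(v) = 0` as well.
Hence `(q_α, p_γ)` is injective on `R`, and bijective because a Lagrangian has dimension `n`: `R` is the graph of a linear map
`(q_α, p_γ) ↦ (q_γ, p_α)`. Its `q_γ`-part depends only on `q_α`, say `q_γ = A q_α`, and
writing `p_α = -Y q_α + B p_γ`, isotropy of `R` forces `Y = Yᵀ` and `B = -Aᵀ`. These two
equations are the rows of the standard form, after sorting the positions as `α`, then `γ`.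
-/

open Matrix

section Symplectic

open LinearMap

variable (ι F : Type*) [Fintype ι] [DecidableEq ι] [Field F]

def symplecticForm : LinearMap.BilinForm F (ι ⊕ ι → F) :=
  Matrix.toLinearMap₂' F (fromBlocks (0 : Matrix ι ι F) 1 (-1) 0)

def IsLagrangian (R : Submodule F (ι ⊕ ι → F)) : Prop :=
  (symplecticForm ι F).orthogonal R = R

variable {ι F}

theorem symplecticForm_apply (v u : ι ⊕ ι → F) :
    symplecticForm ι F v u = v ∘ Sum.inl ⬝ᵥ u ∘ Sum.inr - v ∘ Sum.inr ⬝ᵥ u ∘ Sum.inl := by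
  rw [symplecticForm, toLinearMap₂'_apply', fromBlocks_mulVec, ← Sum.elim_comp_inl_inr v,
    sumElim_dotProduct_sumElim]
  simp [sub_eq_add_neg, neg_mulVec]

theorem symplecticForm_swap (v u : ι ⊕ ι → F) :
    symplecticForm ι F u v = -symplecticForm ι F v u := by
  simp [symplecticForm_apply, dotProduct_comm]

theorem symplecticForm_comp_sumCongr {κ : Type*} [Fintype κ] [DecidableEq κ] (e : κ ≃ ι)
    (v u : ι ⊕ ι → F) :
    symplecticForm κ F (v ∘ e.sumCongr e) (u ∘ e.sumCongr e) = symplecticForm ι F v u := by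
  simp only [symplecticForm_apply]
  exact congr_arg₂ _ (comp_equiv_dotProduct_comp_equiv (v ∘ Sum.inl) (u ∘ Sum.inr) e)
    (comp_equiv_dotProduct_comp_equiv (v ∘ Sum.inr) (u ∘ Sum.inl) e)

theorem isLagrangian_iff {R : Submodule F (ι ⊕ ι → F)} :
    IsLagrangian ι F R ↔ (R : Set (ι ⊕ ι → F)) =
      {v | ∀ u ∈ R, v ⬝ᵥ fromBlocks (0 : Matrix ι ι F) 1 (-1) 0 *ᵥ u = 0} := by
  rw [IsLagrangian, eq_comm, ← SetLike.coe_set_eq]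
  congr! 1
  ext v
  refine forall₂_congr fun u _ => ?_
  rw [symplecticForm_swap, neg_eq_zero, symplecticForm, toLinearMap₂'_apply']

namespace IsLagrangian

variable {R : Submodule F (ι ⊕ ι → F)}

theorem symplecticForm_eq_zero (hR : IsLagrangian ι F R) {u v : ι ⊕ ι → F} (hu : u ∈ R)
    (hv : v ∈ R) : symplecticForm ι F u v = 0 := by
  rw [IsLagrangian] at hR
  rw [← hR] at hv
  exact BilinForm.mem_orthogonal_iff.mp hv u hu

theorem card_le_finrank (hR : IsLagrangian ι F R) : Fintype.card ι ≤ Module.finrank F R := by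
  have := BilinForm.finrank_add_finrank_orthogonal' (B := symplecticForm ι F) R
  rw [hR, Module.finrank_fintype_fun_eq_card, Fintype.card_sum] at this
  omega

theorem map_funCongrLeft {κ : Type*} [Fintype κ] [DecidableEq κ] (hR : IsLagrangian ι F R)
    (e : κ ≃ ι) :
    IsLagrangian κ F (R.map (LinearEquiv.funCongrLeft F F (e.sumCongr e) :
      (ι ⊕ ι → F) →ₗ[F] κ ⊕ κ → F)) := by
  set Φ := LinearEquiv.funCongrLeft F F (e.sumCongr e)
  have hΦ : ∀ v u, symplecticForm κ F (Φ v) (Φ u) = symplecticForm ι F v u :=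
    symplecticForm_comp_sumCongr e
  ext w
  rw [BilinForm.mem_orthogonal_iff, Submodule.mem_map_equiv]
  conv_rhs => rw [← hR, BilinForm.mem_orthogonal_iff]
  refine ⟨fun h u hu => ?_, fun h u' hu' => ?_⟩
  · rw [← hΦ, Φ.apply_symm_apply]
    exact h _ (Submodule.mem_map_of_mem hu)
  · rw [Submodule.mem_map_equiv] at hu'
    rw [← Φ.apply_symm_apply u', ← Φ.apply_symm_apply w, hΦ]
    exact h _ hu'

end IsLagrangian

end Symplectic

section StandardForm

open LinearMap

variable {F : Type*} [Field F] {α γ : Type*} [Fintype α] [Fintype γ] [DecidableEq α]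
  [DecidableEq γ]

/- Columns are ordered `q_α, q_γ, p_α, p_γ`; the two block rows say `p_α = -Y q_α - Aᵀ p_γ`
and `q_γ = A q_α`, which `standardGraph` solves for `(q_γ, p_α)`. -/
def standardParityCheck (Y : Matrix α α F) (A : Matrix γ α F) :
    Matrix (α ⊕ γ) ((α ⊕ γ) ⊕ (α ⊕ γ)) F :=
  fromBlocks (fromCols Y 0) (fromCols 1 Aᵀ) (fromCols (-A) 1) 0

def standardGraph (Y : Matrix α α F) (A : Matrix γ α F) :
    (α → F) × (γ → F) →ₗ[F] (α ⊕ γ) ⊕ (α ⊕ γ) → F where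
  toFun z := Sum.elim (Sum.elim z.1 (A *ᵥ z.1)) (Sum.elim (-(Y *ᵥ z.1) - Aᵀ *ᵥ z.2) z.2)
  map_add' z z' := by
    ext ((a | c) | (a | c)) <;>
      simp only [Prod.fst_add, Prod.snd_add, mulVec_add, Sum.elim_inl, Sum.elim_inr,
        Pi.add_apply, Pi.sub_apply, Pi.neg_apply]
    ring
  map_smul' t z := by
    ext ((a | c) | (a | c)) <;>
      simp only [Prod.smul_fst, Prod.smul_snd, mulVec_smul, Sum.elim_inl, Sum.elim_inr,
        Pi.smul_apply, Pi.sub_apply, Pi.neg_apply, smul_eq_mul, RingHom.id_apply]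
    ring

def graphCoords : ((α ⊕ γ) ⊕ (α ⊕ γ) → F) →ₗ[F] (α → F) × (γ → F) :=
  (funLeft F F (Sum.inl ∘ Sum.inl)).prod (funLeft F F (Sum.inr ∘ Sum.inr))

theorem standardParityCheck_mulVec (Y : Matrix α α F) (A : Matrix γ α F)
    (v : (α ⊕ γ) ⊕ (α ⊕ γ) → F) :
    standardParityCheck Y A *ᵥ v =
      Sum.elim
        (Y *ᵥ (v ∘ Sum.inl ∘ Sum.inl) + (v ∘ Sum.inr ∘ Sum.inl + Aᵀ *ᵥ (v ∘ Sum.inr ∘ Sum.inr)))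
        (-A *ᵥ (v ∘ Sum.inl ∘ Sum.inl) + v ∘ Sum.inl ∘ Sum.inr) := by
  simp [standardParityCheck, fromBlocks_mulVec, fromCols_mulVec, Function.comp_assoc]

theorem ker_standardParityCheck (Y : Matrix α α F) (A : Matrix γ α F) :
    ker (standardParityCheck Y A).mulVecLin = range (standardGraph Y A) := by
  ext v
  rw [mem_ker, mulVecLin_apply, standardParityCheck_mulVec, mem_range]
  constructor
  · intro h
    refine ⟨graphCoords v, ?_⟩
    ext ((a | c) | (a | c))
    · rfl
    · have := congr_fun h (Sum.inr c)
      rw [Sum.elim_inr, Pi.add_apply, neg_mulVec, Pi.neg_apply, Pi.zero_apply] at this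
      show (A *ᵥ (v ∘ Sum.inl ∘ Sum.inl)) c = (v ∘ Sum.inl ∘ Sum.inr) c
      linear_combination -this
    · have := congr_fun h (Sum.inl a)
      rw [Sum.elim_inl, Pi.add_apply, Pi.add_apply, Pi.zero_apply] at this
      show -(Y *ᵥ (v ∘ Sum.inl ∘ Sum.inl)) a - (Aᵀ *ᵥ (v ∘ Sum.inr ∘ Sum.inr)) a =
        (v ∘ Sum.inr ∘ Sum.inl) a
      linear_combination -this
    · rfl
  · rintro ⟨z, rfl⟩
    ext (a | c) <;> simp [standardGraph, neg_mulVec, Function.comp_def]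

theorem LinearMap.exists_mulVec_add_mulVec {δ : Type*}
    (f : (α → F) × (γ → F) →ₗ[F] δ → F) :
    ∃ (P : Matrix δ α F) (Q : Matrix δ γ F), ∀ x y, f (x, y) = P *ᵥ x + Q *ᵥ y :=
  ⟨toMatrix' (f ∘ₗ inl F _ _), toMatrix' (f ∘ₗ inr F _ _), fun x y => by
    simp [toMatrix'_mulVec, ← map_add]⟩

namespace IsLagrangian

variable {R : Submodule F ((α ⊕ γ) ⊕ (α ⊕ γ) → F)}

theorem injective_graphCoords (hR : IsLagrangian (α ⊕ γ) F R)
    (hsurj : ∀ x : α → F, ∃ v ∈ R, v ∘ Sum.inl ∘ Sum.inl = x)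
    (hdet : ∀ v ∈ R, v ∘ Sum.inl ∘ Sum.inl = 0 → v ∘ Sum.inl ∘ Sum.inr = 0) :
    Function.Injective (graphCoords ∘ₗ R.subtype) := by
  rw [injective_iff_map_eq_zero]
  rintro ⟨v, hv⟩ hπ
  have hqα : v ∘ Sum.inl ∘ Sum.inl = 0 := congr_arg Prod.fst hπ
  have hpγ : v ∘ Sum.inr ∘ Sum.inr = 0 := congr_arg Prod.snd hπ
  have hq : v ∘ Sum.inl = 0 := by
    rw [← Sum.elim_comp_inl_inr (v ∘ Sum.inl)]
    exact (congr_arg₂ Sum.elim hqα (hdet v hv hqα)).trans Sum.elim_zero_zero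
  have hpα : v ∘ Sum.inr ∘ Sum.inl = 0 := by
    refine dotProduct_eq_zero _ fun x => ?_
    obtain ⟨u, hu, rfl⟩ := hsurj x
    have := hR.symplecticForm_eq_zero hv hu
    rw [symplecticForm_apply, hq, zero_dotProduct, zero_sub, neg_eq_zero,
      ← Sum.elim_comp_inl_inr (v ∘ Sum.inr), ← Sum.elim_comp_inl_inr (u ∘ Sum.inl),
      sumElim_dotProduct_sumElim] at this
    simpa [Function.comp_assoc, hpγ] using this
  ext ((a | c) | (a | c))
  exacts [congr_fun hq _, congr_fun hq _, congr_fun hpα a, congr_fun hpγ c]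

theorem exists_section (hR : IsLagrangian (α ⊕ γ) F R)
    (hsurj : ∀ x : α → F, ∃ v ∈ R, v ∘ Sum.inl ∘ Sum.inl = x)
    (hdet : ∀ v ∈ R, v ∘ Sum.inl ∘ Sum.inl = 0 → v ∘ Sum.inl ∘ Sum.inr = 0) :
    ∃ E : (α → F) × (γ → F) →ₗ[F] (α ⊕ γ) ⊕ (α ⊕ γ) → F,
      range E = R ∧ graphCoords ∘ₗ E = LinearMap.id := by
  have hinj := hR.injective_graphCoords hsurj hdet
  have hdim : Module.finrank F R = Module.finrank F ((α → F) × (γ → F)) :=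
    le_antisymm (finrank_le_finrank_of_injective hinj) (by simpa using hR.card_le_finrank)
  let g := LinearEquiv.ofBijective _
    ⟨hinj, (injective_iff_surjective_of_finrank_eq_finrank hdim).mp hinj⟩
  refine ⟨R.subtype ∘ₗ g.symm.toLinearMap, ?_, LinearMap.ext g.apply_symm_apply⟩
  rw [range_comp, LinearEquiv.range, Submodule.map_top, Submodule.range_subtype]

theorem exists_eq_standardGraph (hR : IsLagrangian (α ⊕ γ) F R)
    (hdet : ∀ v ∈ R, v ∘ Sum.inl ∘ Sum.inl = 0 → v ∘ Sum.inl ∘ Sum.inr = 0)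
    {E : (α → F) × (γ → F) →ₗ[F] (α ⊕ γ) ⊕ (α ⊕ γ) → F} (hE : range E = R)
    (hsec : graphCoords ∘ₗ E = LinearMap.id) :
    ∃ (Y : Matrix α α F) (A : Matrix γ α F), Y = Yᵀ ∧ E = standardGraph Y A := by
  have hmem : ∀ z, E z ∈ R := fun z => hE ▸ mem_range_self E z
  have hqα : ∀ z, E z ∘ Sum.inl ∘ Sum.inl = z.1 := fun z =>
    congr_arg Prod.fst (LinearMap.congr_fun hsec z)
  have hpγ : ∀ z, E z ∘ Sum.inr ∘ Sum.inr = z.2 := fun z =>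
    congr_arg Prod.snd (LinearMap.congr_fun hsec z)
  obtain ⟨A, A', hqγ⟩ := (funLeft F F (Sum.inl ∘ Sum.inr) ∘ₗ E).exists_mulVec_add_mulVec
  obtain ⟨M, B, hpα⟩ := (funLeft F F (Sum.inr ∘ Sum.inl) ∘ₗ E).exists_mulVec_add_mulVec
  have hA' : ∀ y, A' *ᵥ y = 0 := fun y => by
    have h := hqγ 0 y
    rw [mulVec_zero, zero_add] at h
    rw [← h]
    exact hdet _ (hmem (0, y)) (hqα (0, y))
  have hcoords : ∀ x y,
      E (x, y) = Sum.elim (Sum.elim x (A *ᵥ x)) (Sum.elim (M *ᵥ x + B *ᵥ y) y) := by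
    intro x y
    ext ((a | c) | (a | c))
    · exact congr_fun (hqα (x, y)) a
    · simpa [hA'] using congr_fun (hqγ x y) c
    · exact congr_fun (hpα x y) a
    · exact congr_fun (hpγ (x, y)) c
  have hiso : ∀ x y x' y', x ⬝ᵥ (M *ᵥ x' + B *ᵥ y') + A *ᵥ x ⬝ᵥ y' =
      (M *ᵥ x + B *ᵥ y) ⬝ᵥ x' + y ⬝ᵥ A *ᵥ x' := by
    intro x y x' y'
    have := hR.symplecticForm_eq_zero (hmem (x, y)) (hmem (x', y'))
    rw [hcoords, hcoords, symplecticForm_apply] at this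
    simpa [sumElim_dotProduct_sumElim, sub_eq_zero] using this
  have hM : M = Mᵀ := by
    ext i j
    simpa using hiso (Pi.single i 1) 0 (Pi.single j 1) 0
  have hB : B = -Aᵀ := by
    ext i j
    simpa [eq_neg_iff_add_eq_zero] using hiso (Pi.single i 1) 0 0 (Pi.single j 1)
  refine ⟨-M, A, by rw [transpose_neg, ← hM], LinearMap.ext fun ⟨x, y⟩ => ?_⟩
  rw [hcoords]
  simp [standardGraph, hB, neg_mulVec, sub_eq_add_neg]

theorem exists_ker_standardParityCheck (hR : IsLagrangian (α ⊕ γ) F R)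
    (hsurj : ∀ x : α → F, ∃ v ∈ R, v ∘ Sum.inl ∘ Sum.inl = x)
    (hdet : ∀ v ∈ R, v ∘ Sum.inl ∘ Sum.inl = 0 → v ∘ Sum.inl ∘ Sum.inr = 0) :
    ∃ (Y : Matrix α α F) (A : Matrix γ α F),
      Y = Yᵀ ∧ ker (standardParityCheck Y A).mulVecLin = R := by
  obtain ⟨E, hE, hsec⟩ := hR.exists_section hsurj hdet
  obtain ⟨Y, A, hY, rfl⟩ := hR.exists_eq_standardGraph hdet hE hsec
  exact ⟨Y, A, hY, (ker_standardParityCheck Y A).trans hE⟩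

end IsLagrangian

end StandardForm

section Reindexing

open LinearMap

variable {F : Type*} [Field F]

theorem Submodule.exists_sumEquiv_bijective {ι : Type*} [Fintype ι]
    (S : Submodule F (ι → F)) :
    ∃ (m k : ℕ) (β : Fin m ⊕ Fin k ≃ ι),
      Function.Bijective (funLeft F F (β ∘ Sum.inl) ∘ₗ S.subtype) := by
  classical
  let φ : ι → Module.Dual F S := fun i => proj i ∘ₗ S.subtype
  obtain ⟨I, -, -, hspan, hind⟩ :=
    exists_linearIndepOn_extension (linearIndepOn_empty F φ) (Set.empty_subset Set.univ)
  let β : Fin _ ⊕ Fin _ ≃ ι := ((Fintype.equivFin I).symm.sumCongr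
    (Fintype.equivFin ↥Iᶜ).symm).trans (Equiv.Set.sumCompl I)
  have hinj : Function.Injective (funLeft F F (β ∘ Sum.inl) ∘ₗ S.subtype) := by
    rw [injective_iff_map_eq_zero]
    intro s hs
    have hI : span F (φ '' I) ≤ ker (Module.Dual.eval F S s) := by
      rw [Submodule.span_le]
      rintro _ ⟨i, hi, rfl⟩
      show (s : ι → F) i = 0
      simpa [β] using congr_fun hs (Fintype.equivFin I ⟨i, hi⟩)
    ext j
    exact hI (hspan ⟨j, trivial, rfl⟩)
  refine ⟨_, _, β, hinj, (injective_iff_surjective_of_finrank_eq_finrank ?_).mp hinj⟩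
  refine le_antisymm (finrank_le_finrank_of_injective hinj) ?_
  rw [Module.finrank_fin_fun]
  exact hind.fintype_card_le_finrank.trans_eq Subspace.dual_finrank_eq

theorem ker_mul_toMatrix_sumCongr_submatrix {m κ ι : Type*} [Fintype κ] [DecidableEq κ]
    [Fintype ι] (H : Matrix m (κ ⊕ κ) F) (β e : κ ≃ ι) :
    ker ((H * (((β.trans e.symm).sumCongr (β.trans e.symm)).toPEquiv.toMatrix :
      Matrix (κ ⊕ κ) (κ ⊕ κ) F)).submatrix _root_.id (Sum.map e.symm e.symm)).mulVecLin =
      (ker H.mulVecLin).comap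
        (LinearEquiv.funCongrLeft F F (β.sumCongr β) : (ι ⊕ ι → F) →ₗ[F] κ ⊕ κ → F) := by
  rw [PEquiv.mul_toMatrix_toPEquiv, submatrix_submatrix]
  have : ⇑((β.trans e.symm).sumCongr (β.trans e.symm)).symm ∘ Sum.map e.symm e.symm =
      (β.sumCongr β).symm := by
    ext (k | k) <;> simp
  rw [this, mulVecLin_submatrix]
  ext v
  simp

end Reindexing

/-- Every Lagrangian subspace `R ⊆ F^{2n}` admits a parity-check
matrix in the standard form `[[Y,0,I,Aᵀ],[-A,I,0,0]]·σ_S`, where `n_p + n_q = n`,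
`Y` is symmetric, `A` is `n_q × n_p`, and `σ_S = diag(σ,σ)` is a symplectic
permutation.  (Columns are identified with `Fin n ⊕ Fin n` via
`e : Fin n_p ⊕ Fin n_q ≃ Fin n`.) -/
theorem stmt_6 (F : Type*) [Field F] (n : ℕ)
    (R : Submodule F (Fin n ⊕ Fin n → F))
    (hL : (R : Set (Fin n ⊕ Fin n → F)) = {v | ∀ u ∈ R,
        v ⬝ᵥ (Matrix.fromBlocks (0 : Matrix (Fin n) (Fin n) F) 1 (-1) 0).mulVec u = 0}) :
    ∃ (np nq : ℕ) (h : np + nq = n)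
      (Y : Matrix (Fin np) (Fin np) F) (A : Matrix (Fin nq) (Fin np) F)
      (σ : Equiv.Perm (Fin np ⊕ Fin nq)),
      Y = Y.transpose ∧
      (let σS : Matrix ((Fin np ⊕ Fin nq) ⊕ (Fin np ⊕ Fin nq))
            ((Fin np ⊕ Fin nq) ⊕ (Fin np ⊕ Fin nq)) F :=
          (Equiv.sumCongr σ σ).toPEquiv.toMatrix;
        let H0 : Matrix (Fin np ⊕ Fin nq) ((Fin np ⊕ Fin nq) ⊕ (Fin np ⊕ Fin nq)) F :=
          Matrix.fromBlocks (Matrix.fromCols Y 0) (Matrix.fromCols 1 A.transpose)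
            (Matrix.fromCols (-A) 1) 0;
        let e : (Fin np ⊕ Fin nq) ≃ Fin n := finSumFinEquiv.trans (finCongr h);
        LinearMap.ker ((H0 * σS).submatrix id (Sum.map e.symm e.symm)).mulVecLin = R) := by
  obtain ⟨np, nq, β, hβinj, hβsurj⟩ :=
    (R.map (LinearMap.funLeft F F Sum.inl)).exists_sumEquiv_bijective
  let Φ := LinearEquiv.funCongrLeft F F (β.sumCongr β)
  have hsurj : ∀ x : Fin np → F, ∃ w ∈ R.map Φ.toLinearMap, w ∘ Sum.inl ∘ Sum.inl = x :=
      fun x => by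
    obtain ⟨⟨_, v, hv, rfl⟩, hx⟩ := hβsurj x
    exact ⟨Φ v, Submodule.mem_map_of_mem hv, hx⟩
  have hdet : ∀ w ∈ R.map Φ.toLinearMap,
      w ∘ Sum.inl ∘ Sum.inl = 0 → w ∘ Sum.inl ∘ Sum.inr = 0 := by
    rintro _ ⟨v, hv, rfl⟩ hq
    have hs := (injective_iff_map_eq_zero _).mp hβinj ⟨_, Submodule.mem_map_of_mem hv⟩ hq
    funext c
    exact congr_fun (congr_arg Subtype.val hs) (β (Sum.inr c))
  obtain ⟨Y, A, hY, hker⟩ :=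
    ((isLagrangian_iff.mpr hL).map_funCongrLeft β).exists_ker_standardParityCheck hsurj hdet
  have h : np + nq = n := by simpa using Fintype.card_congr β
  refine ⟨np, nq, h, Y, A, β.trans (finSumFinEquiv.trans (finCongr h)).symm, hY, ?_⟩
  rw [← Submodule.comap_map_eq_of_injective Φ.injective R, ← hker]
  exact ker_mul_toMatrix_sumCongr_submatrix (standardParityCheck Y A) β _
end

section
/- Let R ⊆ F^{2n} be a Lagrangian subspace with a standard-form parity-check matrix determined by (Y, A, σ), i.e., H = [[Y,0,I,Aᵀ],[-A,I,0,0]]·σ_S with Y = Yᵀ. Then R is a Kirchhoff relation (contains the translation vector ε = (1⃗,0)) if and only if Aᵀ·1⃗ = 1⃗ (A is quasi-stochastic in the appropriate sense) and Y·1⃗ = 0. -/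
/-!
The permutation `σ_S = diag(σ, σ)` fixes `ε`, so `H ε = 0` iff the unpermuted block matrix kills
`ε`. Its two block rows applied to `ε = ((1⃗, 1⃗), 0)` give `Y 1⃗` and `1⃗ - A 1⃗`.
-/

open Matrix

theorem Matrix.mul_toMatrix_toPEquiv_mulVec_of_comp_eq {m n α : Type*} [Fintype n]
    [DecidableEq n] [NonAssocSemiring α] (M : Matrix m n α) (e : n ≃ n) {v : n → α}
    (hv : v ∘ e = v) : (M * e.toPEquiv.toMatrix) *ᵥ v = M *ᵥ v := by
  -- `*` elaborates here through `CStarMatrix`'s `HMul` instance, so rewriting with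
  -- `PEquiv.mul_toMatrix_toPEquiv` fails and the equation is stated up to defeq
  have h : M * e.toPEquiv.toMatrix = M.submatrix id e.symm := PEquiv.mul_toMatrix_toPEquiv _ _
  rw [h, submatrix_mulVec_equiv, Equiv.symm_symm, hv, Function.comp_id]

theorem Sum.elim_const_comp_sumCongr {α β γ : Type*} (σ : Equiv.Perm α) (τ : Equiv.Perm β)
    (a b : γ) :
    Sum.elim (fun _ => a) (fun _ => b) ∘ Equiv.sumCongr σ τ =
      Sum.elim (fun _ => a) (fun _ => b) := by
  ext (x | x) <;> rfl

theorem Matrix.fromBlocks_mulVec_sumElim_one_zero {p q R : Type*} [Fintype p] [Fintype q]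
    [DecidableEq p] [DecidableEq q] [Ring R] (Y : Matrix p p R) (A : Matrix q p R) :
    fromBlocks (fromCols Y 0) (fromCols (1 : Matrix p p R) Aᵀ)
        (fromCols (-A) (1 : Matrix q q R)) 0 *ᵥ Sum.elim (fun _ => 1) (fun _ => 0) =
      Sum.elim (Y *ᵥ fun _ => 1) ((fun _ => 1) - A *ᵥ fun _ => 1) := by
  have hone : (fun _ => 1 : p ⊕ q → R) = Sum.elim (fun _ => 1) (fun _ => 1) := by
    ext (x | x) <;> rfl
  rw [fromBlocks_mulVec, Sum.elim_comp_inl, Sum.elim_comp_inr, hone, ← Pi.zero_def]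
  simp only [fromCols_mulVec_sumElim, mulVec_zero, zero_mulVec, one_mulVec, neg_mulVec,
    add_zero, neg_add_eq_sub]

theorem stmt_9_general (F : Type*) [Field F] (np nq : ℕ)
    (Y : Matrix (Fin np) (Fin np) F) (A : Matrix (Fin nq) (Fin np) F)
    (σ : Equiv.Perm (Fin np ⊕ Fin nq)) :
    let σS : Matrix ((Fin np ⊕ Fin nq) ⊕ (Fin np ⊕ Fin nq))
        ((Fin np ⊕ Fin nq) ⊕ (Fin np ⊕ Fin nq)) F :=
      (Equiv.sumCongr σ σ).toPEquiv.toMatrix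
    let H : Matrix (Fin np ⊕ Fin nq) ((Fin np ⊕ Fin nq) ⊕ (Fin np ⊕ Fin nq)) F :=
      Matrix.fromBlocks (Matrix.fromCols Y 0) (Matrix.fromCols 1 A.transpose)
        (Matrix.fromCols (-A) 1) 0 * σS
    ((Sum.elim (fun _ => (1 : F)) (fun _ => (0 : F)))
        ∈ LinearMap.ker H.mulVecLin)
      ↔ (Matrix.vecMul (fun _ => (1 : F)) A.transpose = fun _ => (1 : F)) ∧
        Y.mulVec (fun _ => (1 : F)) = 0 := by
  dsimp only
  rw [LinearMap.mem_ker, mulVecLin_apply,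
    mul_toMatrix_toPEquiv_mulVec_of_comp_eq _ _ (Sum.elim_const_comp_sumCongr σ σ 1 0),
    fromBlocks_mulVec_sumElim_one_zero, ← Sum.elim_zero_zero, Sum.elim_eq_iff, sub_eq_zero,
    vecMul_transpose, eq_comm (a := (fun _ => 1 : Fin nq → F)), and_comm]

/-- A Lagrangian subspace with standard-form parity-check matrix
`H = [[Y,0,I,Aᵀ],[-A,I,0,0]]·σ_S` (with `Y = Yᵀ`) is Kirchhoff (contains the
translation vector `ε = (1⃗,0)`) iff `1⃗ᵀ·Aᵀ = 1⃗` (i.e. `A` is quasi-stochastic)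
and `Y·1⃗ = 0`. -/
theorem stmt_9 (F : Type*) [Field F] (np nq : ℕ)
    (Y : Matrix (Fin np) (Fin np) F) (A : Matrix (Fin nq) (Fin np) F)
    (σ : Equiv.Perm (Fin np ⊕ Fin nq)) (hY : Y = Y.transpose) :
    let σS : Matrix ((Fin np ⊕ Fin nq) ⊕ (Fin np ⊕ Fin nq))
        ((Fin np ⊕ Fin nq) ⊕ (Fin np ⊕ Fin nq)) F :=
      (Equiv.sumCongr σ σ).toPEquiv.toMatrix
    let H : Matrix (Fin np ⊕ Fin nq) ((Fin np ⊕ Fin nq) ⊕ (Fin np ⊕ Fin nq)) F :=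
      Matrix.fromBlocks (Matrix.fromCols Y 0) (Matrix.fromCols 1 A.transpose)
        (Matrix.fromCols (-A) 1) 0 * σS
    ((Sum.elim (fun _ => (1 : F)) (fun _ => (0 : F)))
        ∈ LinearMap.ker H.mulVecLin)
      ↔ (Matrix.vecMul (fun _ => (1 : F)) A.transpose = fun _ => (1 : F)) ∧
        Y.mulVec (fun _ => (1 : F)) = 0 :=
  stmt_9_general F np nq Y A σ
end

section
/- A graph state in KirRel is uniquely determined by a symmetric matrix Y with Y·1⃗ = 0: every Kirchhoff Lagrangian state R ⊆ F^{2k} admitting a parity-check matrix of the form (Y' | I_k)·σ_S can be written with a parity-check matrix (Ỹ | I_k) with no permutation, where Ỹ = σᵀY'σ is symmetric and satisfies Ỹ·1⃗ = 0; moreover R determines Ỹ uniquely (as a function p = -Ỹq). -/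
open Matrix

/-!
Conjugating by the symplectic permutation `σ_S = diag(P, P)` only multiplies the parity-check
matrix on the left by the invertible `P`:
`(Y' | I) σ_S = (Y' P | P) = P (Pᵀ Y' P | I)`, so both define the same relation.
A parity-check matrix `(Y | I)` cuts out the graph `{(q, -Y q)}` of `-Y`, which determines `Y`,
and the Kirchhoff vector `(1⃗, 0)` lies on that graph exactly when `Y 1⃗ = 0`.
-/

section ParityCheck

variable {m n R : Type*} [Fintype m] [Fintype n] [DecidableEq n] [CommRing R]

theorem sumElim_mem_ker_fromCols_one_iff (A : Matrix n m R) (q : m → R) (p : n → R) :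
    Sum.elim q p ∈ LinearMap.ker (fromCols A 1).mulVecLin ↔ p = -(A *ᵥ q) := by
  rw [LinearMap.mem_ker, mulVecLin_apply, fromCols_mulVec_sumElim, one_mulVec,
    eq_neg_iff_add_eq_zero, add_comm]

theorem eq_of_ker_fromCols_one_eq {A B : Matrix n m R}
    (h : LinearMap.ker (fromCols A (1 : Matrix n n R)).mulVecLin =
      LinearMap.ker (fromCols B (1 : Matrix n n R)).mulVecLin) :
    A = B := by
  refine mulVec_injective (funext fun q => neg_injective ?_)
  have hq := (sumElim_mem_ker_fromCols_one_iff A q _).2 rfl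
  rwa [h, sumElim_mem_ker_fromCols_one_iff] at hq

theorem ker_mulVecLin_mul_of_isUnit {P : Matrix n n R} (hP : IsUnit P) (M : Matrix n m R) :
    LinearMap.ker (P * M).mulVecLin = LinearMap.ker M.mulVecLin := by
  rw [mulVecLin_mul, LinearMap.ker_comp_of_ker_eq_bot]
  exact LinearMap.ker_eq_bot.2 (mulVec_injective_of_isUnit hP)

end ParityCheck

section Permutation

variable {m n R : Type*} [DecidableEq m] [DecidableEq n]

theorem permMatrix_sumCongr [Zero R] [One R] (σ : Equiv.Perm m) (τ : Equiv.Perm n) :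
    Equiv.Perm.permMatrix R (Equiv.sumCongr σ τ) =
      fromBlocks (σ.permMatrix R) 0 0 (τ.permMatrix R) := by
  ext (i | i) (j | j) <;> simp [PEquiv.toMatrix_apply]

variable [Fintype n] [CommRing R]

theorem permMatrix_mul_transpose (σ : Equiv.Perm n) :
    σ.permMatrix R * (σ.permMatrix R)ᵀ = 1 := by
  rw [transpose_permMatrix, ← permMatrix_mul, inv_mul_cancel, permMatrix_one]

theorem isUnit_permMatrix (σ : Equiv.Perm n) : IsUnit (σ.permMatrix R) := by
  simpa using (Group.isUnit σ⁻¹).map (permMatrixHom (n := n) (R := R))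

theorem fromCols_one_mul_permMatrix_sumCongr (Y : Matrix n n R) (σ : Equiv.Perm n) :
    (fromCols Y 1 : Matrix n (n ⊕ n) R) * Equiv.Perm.permMatrix R (Equiv.sumCongr σ σ) =
      σ.permMatrix R * fromCols ((σ.permMatrix R)ᵀ * Y * σ.permMatrix R) 1 := by
  rw [permMatrix_sumCongr, fromCols_mul_fromBlocks, mul_fromCols, ← mul_assoc, ← mul_assoc,
    permMatrix_mul_transpose]
  simp

end Permutation

/-- A graph state (a Kirchhoff Lagrangian state of `F^{2k}` with
parity-check matrix `(Y' | I)·σ_S`, `Y'` symmetric) can be written with a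
parity-check matrix `(Ỹ | I)` with no permutation, where `Ỹ = σᵀY'σ` is
symmetric and `Ỹ·1⃗ = 0`; moreover `Ỹ` is uniquely determined by the state. -/
theorem stmt_15 (F : Type*) [Field F] (k : ℕ)
    (Y' : Matrix (Fin k) (Fin k) F) (hY' : Y' = Y'.transpose)
    (σ : Equiv.Perm (Fin k)) :
    let σS : Matrix (Fin k ⊕ Fin k) (Fin k ⊕ Fin k) F :=
      (Equiv.sumCongr σ σ).toPEquiv.toMatrix
    let R := LinearMap.ker (Matrix.fromCols Y' 1 * σS).mulVecLin
    (Sum.elim (fun _ => (1 : F)) (fun _ => (0 : F)) ∈ R) →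
    ∃ Ytil : Matrix (Fin k) (Fin k) F,
      Ytil = (σ.toPEquiv.toMatrix : Matrix (Fin k) (Fin k) F).transpose * Y' *
        (σ.toPEquiv.toMatrix : Matrix (Fin k) (Fin k) F) ∧
      Ytil = Ytil.transpose ∧ Ytil.mulVec 1 = 0 ∧
      R = LinearMap.ker (Matrix.fromCols Ytil 1).mulVecLin ∧
      ∀ Z : Matrix (Fin k) (Fin k) F,
        R = LinearMap.ker (Matrix.fromCols Z 1).mulVecLin → Z = Ytil := by
  intro σS R hKirchhoff
  set P : Matrix (Fin k) (Fin k) F := σ.permMatrix F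
  have hR : R = LinearMap.ker (fromCols (Pᵀ * Y' * P) 1).mulVecLin := by
    rw [← ker_mulVecLin_mul_of_isUnit (isUnit_permMatrix σ),
      ← fromCols_one_mul_permMatrix_sumCongr]
    rfl
  refine ⟨Pᵀ * Y' * P, rfl, ?_, ?_, hR, fun Z hZ => eq_of_ker_fromCols_one_eq (hZ.symm.trans hR)⟩
  · rw [transpose_mul, transpose_mul, transpose_transpose, ← hY', mul_assoc]
  · rw [hR] at hKirchhoff
    exact neg_eq_zero.1 ((sumElim_mem_ker_fromCols_one_iff _ _ _).1 hKirchhoff).symm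
end

section
/- Let W = {(V',I') ∈ F^n⊕F^n | YV' = -I'} be a graph state with Y symmetric and Y·1⃗ = 0, and let M = [I_{n}; A]ᵀ-style stacked matrix M = (I over A) for a quasi-stochastic matrix A (A·1⃗ = 1⃗). Then the relational composite of L(M) = {((V',I'),(V,I)) | V = MV', I' = MᵀI} with W is the Lagrangian state {((V₁,V₂),(I₁,I₂)) | V₂ = AV₁ and YV₁ = -(I₁ + AᵀI₂)}, whose parity-check matrix is the standard Kirchhoff form [[Y,0,I,Aᵀ],[-A,I,0,0]]. -/
open Matrix

/-!
Writing `M = (1 ; A)`, the relation `L(M)` forces `V = (V', AV')` and `I' = I₁ + AᵀI₂`, so the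
intermediate pair `(V', I')` of the composite is determined by `(V, I)`: it is `(V₁, I₁ + AᵀI₂)`.
Eliminating it leaves the condition `V₂ = AV₁` together with the graph-state equation for that
pair, and the two block rows of the Kirchhoff matrix are exactly these two equations.
-/

section KirchhoffState

variable {R : Type*} [Ring R] {n m : Type*} [Fintype n] [DecidableEq n]

lemma eq_fromRows_one_mulVec_iff (A : Matrix m n R) (v : n → R) (u : n ⊕ m → R) :
    u = fromRows 1 A *ᵥ v ↔ v = u ∘ Sum.inl ∧ u ∘ Sum.inr = A *ᵥ v := by
  rw [fromRows_mulVec, one_mulVec, ← Sum.elim_comp_inl_inr u, Sum.elim_eq_iff,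
    Sum.elim_comp_inl, Sum.elim_comp_inr, eq_comm (a := u ∘ Sum.inl)]

variable [Fintype m]

lemma transpose_fromRows_one_mulVec (A : Matrix m n R) (w : n ⊕ m → R) :
    (fromRows 1 A)ᵀ *ᵥ w = w ∘ Sum.inl + Aᵀ *ᵥ (w ∘ Sum.inr) := by
  rw [transpose_fromRows, transpose_one, fromCols_mulVec, one_mulVec]

theorem exists_graphState_fromRows_one_iff (Y : Matrix n n R) (A : Matrix m n R)
    (V I : n ⊕ m → R) :
    (∃ vi : (n → R) × (n → R), Y *ᵥ vi.1 = -vi.2 ∧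
        V = fromRows 1 A *ᵥ vi.1 ∧ vi.2 = (fromRows 1 A)ᵀ *ᵥ I) ↔
      V ∘ Sum.inr = A *ᵥ (V ∘ Sum.inl) ∧
        Y *ᵥ (V ∘ Sum.inl) = -(I ∘ Sum.inl + Aᵀ *ᵥ (I ∘ Sum.inr)) := by
  simp only [eq_fromRows_one_mulVec_iff, transpose_fromRows_one_mulVec]
  constructor
  · rintro ⟨⟨v, i⟩, hW, ⟨rfl, hV⟩, rfl⟩
    exact ⟨hV, hW⟩
  · rintro ⟨hV, hW⟩
    exact ⟨(V ∘ Sum.inl, _), hW, ⟨rfl, hV⟩, rfl⟩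

variable [DecidableEq m]

theorem kirchhoff_mulVec_sumElim_eq_zero_iff (Y : Matrix n n R) (A : Matrix m n R)
    (V I : n ⊕ m → R) :
    fromBlocks (fromCols Y 0) (fromCols 1 Aᵀ) (fromCols (-A) 1) 0 *ᵥ Sum.elim V I = 0 ↔
      V ∘ Sum.inr = A *ᵥ (V ∘ Sum.inl) ∧
        Y *ᵥ (V ∘ Sum.inl) = -(I ∘ Sum.inl + Aᵀ *ᵥ (I ∘ Sum.inr)) := by
  rw [fromBlocks_mulVec, ← Sum.elim_zero_zero, Sum.elim_eq_iff]
  simp only [Sum.elim_comp_inl, Sum.elim_comp_inr, fromCols_mulVec, zero_mulVec, add_zero,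
    one_mulVec, neg_mulVec]
  rw [add_eq_zero_iff_eq_neg, neg_add_eq_zero, and_comm, eq_comm (a := A *ᵥ _)]

end KirchhoffState

theorem stmt_18_general (F : Type*) [Field F] (n m : ℕ)
    (Y : Matrix (Fin n) (Fin n) F)
    (A : Matrix (Fin m) (Fin n) F) :
    let M : Matrix (Fin n ⊕ Fin m) (Fin n) F :=
      Matrix.fromRows (1 : Matrix (Fin n) (Fin n) F) A
    let W : Set ((Fin n → F) × (Fin n → F)) := {vi | Y.mulVec vi.1 = -vi.2}
    let LM : Set (((Fin n → F) × (Fin n → F)) ×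
        ((Fin n ⊕ Fin m → F) × (Fin n ⊕ Fin m → F))) :=
      {x | x.2.1 = M.mulVec x.1.1 ∧ x.1.2 = M.transpose.mulVec x.2.2}
    let comp : Set ((Fin n ⊕ Fin m → F) × (Fin n ⊕ Fin m → F)) :=
      {VI | ∃ vi ∈ W, (vi, VI) ∈ LM}
    let H : Matrix (Fin n ⊕ Fin m) ((Fin n ⊕ Fin m) ⊕ (Fin n ⊕ Fin m)) F :=
      Matrix.fromBlocks (Matrix.fromCols Y 0) (Matrix.fromCols 1 A.transpose)
        (Matrix.fromCols (-A) 1) 0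
    comp = {VI | (fun j => VI.1 (Sum.inr j)) = A.mulVec (fun i => VI.1 (Sum.inl i)) ∧
        Y.mulVec (fun i => VI.1 (Sum.inl i))
          = -((fun i => VI.2 (Sum.inl i)) +
              A.transpose.mulVec (fun j => VI.2 (Sum.inr j)))} ∧
    comp = {VI | H.mulVec (Sum.elim VI.1 VI.2) = 0} := by
  intro M W LM comp H
  have mem_comp (VI : (Fin n ⊕ Fin m → F) × (Fin n ⊕ Fin m → F)) : VI ∈ comp ↔ _ :=
    exists_graphState_fromRows_one_iff Y A VI.1 VI.2
  exact ⟨Set.ext mem_comp, Set.ext fun VI =>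
    (mem_comp VI).trans (kirchhoff_mulVec_sumElim_eq_zero_iff Y A VI.1 VI.2).symm⟩

/-- Composing `L(M)` (with `M = (I ; A)` stacked, `A`
quasi-stochastic) with the graph state `W = {(V',I') | YV' = -I'}` (`Y`
symmetric, `Y·1⃗ = 0`) yields exactly the Lagrangian state
`{((V₁,V₂),(I₁,I₂)) | V₂ = AV₁ ∧ YV₁ = -(I₁ + AᵀI₂)}`, whose parity-check
matrix is the standard Kirchhoff form `[[Y,0,I,Aᵀ],[-A,I,0,0]]`. -/
theorem stmt_18 (F : Type*) [Field F] (n m : ℕ)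
    (Y : Matrix (Fin n) (Fin n) F) (hY : Y = Y.transpose) (hY1 : Y.mulVec 1 = 0)
    (A : Matrix (Fin m) (Fin n) F) (hA : A.mulVec 1 = 1) :
    let M : Matrix (Fin n ⊕ Fin m) (Fin n) F :=
      Matrix.fromRows (1 : Matrix (Fin n) (Fin n) F) A
    let W : Set ((Fin n → F) × (Fin n → F)) := {vi | Y.mulVec vi.1 = -vi.2}
    let LM : Set (((Fin n → F) × (Fin n → F)) ×
        ((Fin n ⊕ Fin m → F) × (Fin n ⊕ Fin m → F))) :=
      {x | x.2.1 = M.mulVec x.1.1 ∧ x.1.2 = M.transpose.mulVec x.2.2}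
    let comp : Set ((Fin n ⊕ Fin m → F) × (Fin n ⊕ Fin m → F)) :=
      {VI | ∃ vi ∈ W, (vi, VI) ∈ LM}
    let H : Matrix (Fin n ⊕ Fin m) ((Fin n ⊕ Fin m) ⊕ (Fin n ⊕ Fin m)) F :=
      Matrix.fromBlocks (Matrix.fromCols Y 0) (Matrix.fromCols 1 A.transpose)
        (Matrix.fromCols (-A) 1) 0
    comp = {VI | (fun j => VI.1 (Sum.inr j)) = A.mulVec (fun i => VI.1 (Sum.inl i)) ∧
        Y.mulVec (fun i => VI.1 (Sum.inl i))
          = -((fun i => VI.2 (Sum.inl i)) +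
              A.transpose.mulVec (fun j => VI.2 (Sum.inr j)))} ∧
    comp = {VI | H.mulVec (Sum.elim VI.1 VI.2) = 0} :=
  stmt_18_general F n m Y A
end

section
/- Deterministic quasi-stochastic structure is preserved under row reduction: let B = (-A | I_{k}) be a k×(k+m) matrix over F where A is deterministic quasi-stochastic (each row of A has exactly one nonzero entry, equal to 1), so each row of B has exactly one entry 1 and one entry -1 and zeros elsewhere. If B' is obtained from B·σ (σ a permutation of columns) by Gaussian row-reduction to reduced form with full rank k, and no two rows of B become linearly dependent, then every row of B' again has exactly one entry equal to 1 and one entry equal to -1 (up to overall sign), zeros elsewhere. -/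
/-! Write the rows of `B·σ` as `e_{b r} - e_{a r}`: edges of a graph on the columns. On the
row space `V`, every vector sums to zero over each connected component, and `e_x - e_y ∈ V`
whenever `x` and `y` are connected. A row `w` of `B'` is `1` at its own pivot `p` and `0` at the
other pivots, so the zero sum over the component of `p` produces a non-pivot column `u` in that
component with `w u ≠ 0`. Then `w - (e_p - e_u)` lies in `V` and vanishes at every pivot, hence is
zero, because the reduced form makes an element of `V` determined by its pivot entries. -/

open Matrix Submodule Set

section EdgeSpan

variable (R : Type*) {ι κ : Type*} [Ring R] [DecidableEq ι] (a b : κ → ι)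

def edgeRel (x y : ι) : Prop := ∃ r, a r = x ∧ b r = y

def edgeSpan : Submodule R (ι → R) :=
  span R (range fun r => Pi.single (b r) 1 - Pi.single (a r) 1)

variable {R}

theorem single_sub_single_mem_edgeSpan_of_eqvGen {x y : ι}
    (h : Relation.EqvGen (edgeRel a b) x y) :
    (Pi.single x 1 - Pi.single y 1 : ι → R) ∈ edgeSpan R a b := by
  induction h with
  | rel x y hxy =>
    obtain ⟨r, rfl, rfl⟩ := hxy
    rw [← neg_sub]
    exact neg_mem (subset_span ⟨r, rfl⟩)
  | refl x => simp
  | symm x y _ ih =>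
    rw [← neg_sub]
    exact neg_mem ih
  | trans x y z _ _ ih₁ ih₂ =>
    rw [← sub_add_sub_cancel _ (Pi.single y 1)]
    exact add_mem ih₁ ih₂

theorem sum_eqvGen_eq_zero_of_mem_edgeSpan [Fintype ι] (z : ι)
    [DecidablePred fun y => Relation.EqvGen (edgeRel a b) y z] {v : ι → R}
    (hv : v ∈ edgeSpan R a b) :
    ∑ y with Relation.EqvGen (edgeRel a b) y z, v y = 0 := by
  induction hv using Submodule.span_induction with
  | mem v hv =>
    obtain ⟨r, rfl⟩ := hv
    have hab : Relation.EqvGen (edgeRel a b) (a r) (b r) := .rel _ _ ⟨r, rfl, rfl⟩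
    have hiff : Relation.EqvGen (edgeRel a b) (b r) z ↔ Relation.EqvGen (edgeRel a b) (a r) z :=
      ⟨Relation.EqvGen.trans _ _ _ hab, Relation.EqvGen.trans _ _ _ hab.symm⟩
    simp [Finset.sum_sub_distrib, Finset.sum_pi_single', hiff]
  | zero => simp
  | add v w _ _ hv hw => simp [Finset.sum_add_distrib, hv, hw]
  | smul c v _ hv => simp [← Finset.mul_sum, hv]

end EdgeSpan

theorem eq_zero_of_mem_span_row_of_apply_eq_zero {R ι κ : Type*} [Ring R] [Fintype κ]
    [DecidableEq κ] {B : Matrix κ ι R} {p : κ → ι} (hp : B.submatrix id p = 1)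
    {v : ι → R} (hv : v ∈ span R (range B.row)) (h0 : ∀ s, v (p s) = 0) : v = 0 := by
  rw [← range_vecMulLinear] at hv
  obtain ⟨c, rfl⟩ := hv
  have hc : (c ᵥ* B) ∘ p = c := by
    simpa [hp] using (submatrix_vecMul_equiv B c (Equiv.refl κ) p).symm
  have : c = 0 := by rw [← hc]; exact funext h0
  simp [this]

theorem exists_row_eq_single_sub_single {R ι κ : Type*} [Ring R] [Nontrivial R]
    [Fintype ι] [DecidableEq ι] [Fintype κ] [DecidableEq κ] (a b : κ → ι)
    {B : Matrix κ ι R} {p : κ → ι} (hp : B.submatrix id p = 1)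
    (hspan : span R (range B.row) = edgeSpan R a b) (i : κ) :
    ∃ u ≠ p i, B i = Pi.single (p i) 1 - Pi.single u 1 := by
  classical
  have hw : B i ∈ span R (range B.row) := subset_span ⟨i, rfl⟩
  have hpiv : ∀ s, B i (p s) = if i = s then 1 else 0 := fun s => by
    simpa [one_apply] using congrFun (congrFun hp i) s
  set C : Finset ι := {y | Relation.EqvGen (edgeRel a b) y (p i)}
  obtain ⟨u, hu, hwu⟩ : ∃ u ∈ C.erase (p i), B i u ≠ 0 := by
    apply Finset.exists_ne_zero_of_sum_ne_zero
    have hsplit := C.add_sum_erase (B i) (by simpa [C] using Relation.EqvGen.refl (p i))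
    rw [sum_eqvGen_eq_zero_of_mem_edgeSpan a b _ (hspan ▸ hw), hpiv, if_pos rfl] at hsplit
    intro h
    simp [h] at hsplit
  obtain ⟨hne, hu⟩ := Finset.mem_erase.1 hu
  have hu_pivot : ∀ s, p s ≠ u := by
    rintro s rfl
    rw [hpiv] at hwu
    split_ifs at hwu with h
    · exact hne (h ▸ rfl)
    · exact hwu rfl
  refine ⟨u, hne, sub_eq_zero.1 (eq_zero_of_mem_span_row_of_apply_eq_zero hp ?_ fun s => ?_)⟩
  · rw [hspan] at hw ⊢
    exact sub_mem hw (single_sub_single_mem_edgeSpan_of_eqvGen a b (Finset.mem_filter.1 hu).2.symm)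
  · by_cases hs : p s = p i
    · simp [hs, hpiv, hne.symm]
    · have hsi : i ≠ s := fun h => hs (h ▸ rfl)
      simp [hpiv, hs, hsi, hu_pivot s]

theorem row_submatrix_fromCols_neg_one {R κ μ : Type*} [Ring R] [DecidableEq κ] [DecidableEq μ]
    {A : Matrix κ μ R} {r : κ} {j : μ} (hr : A r = Pi.single j 1)
    (σ : Equiv.Perm (μ ⊕ κ)) :
    (fromCols (-A) 1).submatrix id σ r =
      Pi.single (σ.symm (.inr r)) 1 - Pi.single (σ.symm (.inl j)) 1 := by
  have hrow : fromCols (-A) 1 r = Pi.single (.inr r) 1 - Pi.single (.inl j) 1 := by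
    ext (j' | s) <;> simp [hr, one_apply, Pi.single_apply, eq_comm]
  rw [← Pi.single_comp_equiv σ, ← Pi.single_comp_equiv σ, ← Pi.sub_comp, ← hrow]
  rfl

theorem stmt_19_general (F : Type*) [Field F] (k m : ℕ)
    (A : Matrix (Fin k) (Fin m) F)
    (hA : ∀ i, ∃ j, A i j = 1 ∧ ∀ j', j' ≠ j → A i j' = 0)
    (σ : Equiv.Perm (Fin m ⊕ Fin k))
    (B' : Matrix (Fin k) (Fin m ⊕ Fin k) F)
    (hspan : LinearMap.range B'.transpose.mulVecLin
      = LinearMap.range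
          (((Matrix.fromCols (-A) (1 : Matrix (Fin k) (Fin k) F)).submatrix
            id σ)).transpose.mulVecLin)
    (hreduced : ∃ (τ : Equiv.Perm (Fin m ⊕ Fin k)) (A' : Matrix (Fin k) (Fin m) F),
      B'.submatrix id τ
        = Matrix.fromCols (-A') (1 : Matrix (Fin k) (Fin k) F)) :
    ∀ i, ∃ c : F, (c = 1 ∨ c = -1) ∧ ∃ j₁ j₂, j₁ ≠ j₂ ∧
      B' i j₁ = c ∧ B' i j₂ = -c ∧ ∀ j, j ≠ j₁ → j ≠ j₂ → B' i j = 0 := by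
  intro i
  obtain ⟨τ, A', hτ⟩ := hreduced
  have hrow : ∀ r, ∃ j, A r = Pi.single j 1 := fun r => by
    obtain ⟨j, hj, hj'⟩ := hA r
    refine ⟨j, funext fun j' => ?_⟩
    by_cases h : j' = j <;> simp [h, hj, hj']
  choose col hcol using hrow
  have hpiv : B'.submatrix id (τ ∘ Sum.inr) = 1 := by
    change (B'.submatrix id τ).submatrix id Sum.inr = 1
    rw [hτ]
    ext; simp
  have hspan' : span F (range B'.row) =
      edgeSpan F (fun r => σ.symm (.inl (col r))) (fun r => σ.symm (.inr r)) := by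
    rw [← col_transpose, ← range_mulVecLin, hspan, range_mulVecLin, col_transpose]
    congr 2
    funext r
    exact row_submatrix_fromCols_neg_one (hcol r) σ
  obtain ⟨u, hne, hu⟩ := exists_row_eq_single_sub_single _ _ hpiv hspan' i
  rw [Function.comp_apply] at hne hu
  refine ⟨1, Or.inl rfl, τ (.inr i), u, hne.symm, by simp [hu, hne], by simp [hu, hne.symm],
    fun j h₁ h₂ => by simp [hu, h₁, h₂]⟩

/-- Deterministic structure is preserved under row reduction.
Let `B = (-A | I_k)` with `A` deterministic (each row of `A` has exactly one
nonzero entry, equal to `1`), so each row of `B` has exactly one `1` and one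
`-1`.  If `B'` has the same row space as `B·σ` (a column permutation of `B`),
has full rank `k` ("no two rows become linearly dependent"), and is in reduced
standard form `(-A' | I_k)` up to a column permutation `τ`, then every row of
`B'` again has exactly one entry `c` and one entry `-c` with `c = ±1`, and
zeros elsewhere. -/
theorem stmt_19 (F : Type*) [Field F] (k m : ℕ)
    (A : Matrix (Fin k) (Fin m) F)
    (hA : ∀ i, ∃ j, A i j = 1 ∧ ∀ j', j' ≠ j → A i j' = 0)
    (σ : Equiv.Perm (Fin m ⊕ Fin k))
    (B' : Matrix (Fin k) (Fin m ⊕ Fin k) F)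
    (hspan : LinearMap.range B'.transpose.mulVecLin
      = LinearMap.range
          (((Matrix.fromCols (-A) (1 : Matrix (Fin k) (Fin k) F)).submatrix
            id σ)).transpose.mulVecLin)
    (hrank : B'.rank = k)
    (hreduced : ∃ (τ : Equiv.Perm (Fin m ⊕ Fin k)) (A' : Matrix (Fin k) (Fin m) F),
      B'.submatrix id τ
        = Matrix.fromCols (-A') (1 : Matrix (Fin k) (Fin k) F)) :
    ∀ i, ∃ c : F, (c = 1 ∨ c = -1) ∧ ∃ j₁ j₂, j₁ ≠ j₂ ∧
      B' i j₁ = c ∧ B' i j₂ = -c ∧ ∀ j, j ≠ j₁ → j ≠ j₂ → B' i j = 0 :=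
  stmt_19_general F k m A hA σ B' hspan hreduced
end
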